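/- Let P, Q be nonzero coprime polynomials over F_q with deg P > deg Q ≥ 1. For w ∈ F_q[X] and k ∈ ℕ define R_k(w) as the set of length-k digit strings s (over D = {s : deg s < deg P}) such that (P/Q)^k·w + π(s) ∈ F_q[X], where π(s_{k-1}⋯s_0) = Σ (s_i/Q)(P/Q)^i. Then R_k(w) is nonempty for every w and k, and |R_k(w)| = q^{k(deg P − deg Q)}. -/

import Mathlib

/-!
Prepending a digit is one step of the expansion graph: `(P/Q)^(k+1) w + π(d :: s)` equals
`(d + P y) / Q` with `y = (P/Q)^k w + π(s)`. If the longer continuation ends at a polynomial, so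
does the shorter one, because `P y` is then a polynomial, `Q^k y` always is, and `P`, `Q^k` are
coprime. So a continuation of length `k + 1` is a continuation of length `k`, ending at some
`u ∈ F_q[X]`, followed by a digit `d` with `Q ∣ d + P u`. These digits form the residue class of
`-P u` modulo `Q` among polynomials of degree `< deg P`, which has `q^(deg P - deg Q)` elements.
-/

open Polynomial

namespace PQExpansion

section Expansion

variable {K : Type*} [Field K]

/-- `(p/q)^k x + π(s)`: the node reached from `x` in the expansion graph of `p/q` along the digits
`s (k-1), …, s 0`. -/
def expansion (p q x : K) {k : ℕ} (s : Fin k → K) : K :=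
  (p / q) ^ k * x + ∑ i : Fin k, s i / q * (p / q) ^ (i : ℕ)

theorem expansion_fin_zero (p q x : K) (s : Fin 0 → K) : expansion p q x s = x := by
  simp [expansion]

theorem expansion_cons (p q x d : K) {k : ℕ} (s : Fin k → K) :
    expansion p q x (Fin.cons d s : Fin (k + 1) → K) = (d + p * expansion p q x s) / q := by
  simp only [expansion, Fin.sum_univ_succ, Fin.cons_zero, Fin.cons_succ, Fin.val_zero,
    Fin.val_succ, pow_succ, mul_add, add_div, Finset.mul_sum, Finset.sum_div]
  ring_nf

theorem pow_mul_expansion_mem {S : Subring K} {p q x : K} (hq : q ≠ 0) (hp : p ∈ S)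
    (hqS : q ∈ S) (hx : x ∈ S) {k : ℕ} {s : Fin k → K} (hs : ∀ i, s i ∈ S) :
    q ^ k * expansion p q x s ∈ S := by
  induction k with
  | zero => rwa [pow_zero, one_mul, expansion_fin_zero]
  | succ k ih =>
    have hcons : q ^ (k + 1) * expansion p q x s =
        q ^ k * s 0 + p * (q ^ k * expansion p q x (Fin.tail s)) := by
      rw [← Fin.cons_self_tail s, expansion_cons, Fin.cons_self_tail]
      field_simp
      ring
    rw [hcons]
    exact S.add_mem (S.mul_mem (S.pow_mem hqS k) (hs 0)) (S.mul_mem hp (ih fun i => hs _))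

end Expansion

section Integrality

variable {R K : Type*} [CommRing R] [Field K] [Algebra R K]

theorem mem_range_of_isCoprime {p q : R} (h : IsCoprime p q) {y : K}
    (hp : algebraMap R K p * y ∈ (algebraMap R K).range)
    (hq : algebraMap R K q * y ∈ (algebraMap R K).range) :
    y ∈ (algebraMap R K).range := by
  obtain ⟨a, b, hab⟩ := h
  have hy : y = algebraMap R K a * (algebraMap R K p * y) +
      algebraMap R K b * (algebraMap R K q * y) := by
    rw [← mul_assoc, ← mul_assoc, ← add_mul, ← map_mul, ← map_mul, ← map_add, hab, map_one,
      one_mul]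
  rw [hy]
  exact add_mem (mul_mem ⟨a, rfl⟩ hp) (mul_mem ⟨b, rfl⟩ hq)

variable [FaithfulSMul R K]

theorem algebraMap_div_mem_range_iff {a b : R} (hb : b ≠ 0) :
    algebraMap R K a / algebraMap R K b ∈ (algebraMap R K).range ↔ b ∣ a := by
  have hb' : algebraMap R K b ≠ 0 :=
    (map_ne_zero_iff _ (FaithfulSMul.algebraMap_injective R K)).mpr hb
  constructor
  · rintro ⟨c, hc⟩
    refine ⟨c, FaithfulSMul.algebraMap_injective R K ?_⟩
    rw [map_mul, hc, mul_div_cancel₀ _ hb']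
  · rintro ⟨c, rfl⟩
    exact ⟨c, by rw [map_mul, mul_div_cancel_left₀ _ hb']⟩

end Integrality

section Continuation

variable {R : Type*} (K : Type*) [CommRing R] [Field K] [Algebra R K]

/-- The set `R_k(w)` of the paper, for an arbitrary digit set `D`. -/
def Continuation (D : Set R) (P Q w : R) (k : ℕ) : Type _ :=
  {s : Fin k → R // (∀ i, s i ∈ D) ∧
    expansion (algebraMap R K P) (algebraMap R K Q) (algebraMap R K w) (algebraMap R K ∘ s) ∈
      (algebraMap R K).range}

variable {K} {D : Set R} {P Q w : R} {k : ℕ}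

noncomputable def Continuation.endpoint (s : Continuation K D P Q w k) : R :=
  s.2.2.choose

theorem Continuation.algebraMap_endpoint (s : Continuation K D P Q w k) :
    algebraMap R K s.endpoint =
      expansion (algebraMap R K P) (algebraMap R K Q) (algebraMap R K w) (algebraMap R K ∘ s.1) :=
  s.2.2.choose_spec

theorem Continuation.card_zero : Nat.card (Continuation K D P Q w 0) = 1 :=
  Nat.card_eq_one_iff_unique.mpr
    ⟨⟨fun _ _ => Subtype.ext (Subsingleton.elim _ _)⟩,
      ⟨⟨Fin.elim0, fun i => i.elim0, by rw [expansion_fin_zero]; exact ⟨w, rfl⟩⟩⟩⟩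

variable [FaithfulSMul R K]

theorem expansion_cons_mem_range_iff (hQ : Q ≠ 0) {t : Fin k → R} {u : R}
    (hu : algebraMap R K u =
      expansion (algebraMap R K P) (algebraMap R K Q) (algebraMap R K w) (algebraMap R K ∘ t))
    (d : R) :
    expansion (algebraMap R K P) (algebraMap R K Q) (algebraMap R K w)
        (algebraMap R K ∘ (Fin.cons d t : Fin (k + 1) → R)) ∈ (algebraMap R K).range ↔
      Q ∣ d + P * u := by
  rw [Fin.comp_cons, expansion_cons, ← hu, ← map_mul, ← map_add,
    algebraMap_div_mem_range_iff hQ]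

theorem expansion_mem_range_of_cons (hQ : Q ≠ 0) (hcop : IsCoprime P Q) {d : R}
    {t : Fin k → R}
    (h : expansion (algebraMap R K P) (algebraMap R K Q) (algebraMap R K w)
        (algebraMap R K ∘ (Fin.cons d t : Fin (k + 1) → R)) ∈ (algebraMap R K).range) :
    expansion (algebraMap R K P) (algebraMap R K Q) (algebraMap R K w) (algebraMap R K ∘ t) ∈
      (algebraMap R K).range := by
  have hQ' : algebraMap R K Q ≠ 0 :=
    (map_ne_zero_iff _ (FaithfulSMul.algebraMap_injective R K)).mpr hQ
  set y := expansion (algebraMap R K P) (algebraMap R K Q) (algebraMap R K w)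
    (algebraMap R K ∘ t)
  rw [Fin.comp_cons, expansion_cons] at h
  have hP : algebraMap R K P * y ∈ (algebraMap R K).range := by
    have hPy : algebraMap R K P * y =
        algebraMap R K Q * ((algebraMap R K d + algebraMap R K P * y) / algebraMap R K Q) -
          algebraMap R K d := by
      field_simp
      ring
    rw [hPy]
    exact sub_mem (mul_mem ⟨Q, rfl⟩ h) ⟨d, rfl⟩
  have hQk : algebraMap R K (Q ^ k) * y ∈ (algebraMap R K).range := by
    rw [map_pow]
    exact pow_mul_expansion_mem (S := (algebraMap R K).range) hQ' ⟨P, rfl⟩ ⟨Q, rfl⟩ ⟨w, rfl⟩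
      fun i => ⟨t i, rfl⟩
  exact mem_range_of_isCoprime hcop.pow_right hP hQk

noncomputable def Continuation.consEquiv (hQ : Q ≠ 0) (hcop : IsCoprime P Q) :
    Continuation K D P Q w (k + 1) ≃
      Σ t : Continuation K D P Q w k, {d : R // d ∈ D ∧ Q ∣ d + P * t.endpoint} where
  toFun s :=
    have ht : ∀ i, Fin.tail s.1 i ∈ D := fun i => s.2.1 i.succ
    have hs := Fin.cons_self_tail s.1 ▸ s.2.2
    let t : Continuation K D P Q w k := ⟨Fin.tail s.1, ht, expansion_mem_range_of_cons hQ hcop hs⟩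
    ⟨t, s.1 0, s.2.1 0, (expansion_cons_mem_range_iff hQ t.algebraMap_endpoint _).mp hs⟩
  invFun x := ⟨Fin.cons x.2.1 x.1.1, Fin.cases x.2.2.1 x.1.2.1,
    (expansion_cons_mem_range_iff hQ x.1.algebraMap_endpoint _).mpr x.2.2.2⟩
  left_inv s := Subtype.ext (Fin.cons_self_tail s.1)
  right_inv _ := Sigma.subtype_ext (Subtype.ext rfl) rfl

end Continuation

theorem degree_mul_lt_iff {R : Type*} [Semiring R] [NoZeroDivisors R] {Q t : R[X]} {n : ℕ}
    (hQ : Q ≠ 0) (hn : Q.natDegree ≤ n) :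
    (Q * t).degree < n ↔ t.degree < ↑(n - Q.natDegree) := by
  rcases eq_or_ne t 0 with rfl | ht
  · simp
  rw [degree_eq_natDegree (mul_ne_zero hQ ht), degree_eq_natDegree ht, natDegree_mul hQ ht]
  norm_cast
  omega

section FiniteField

variable {F : Type*} [Field F] {P Q : F[X]}

noncomputable def residueClassEquiv (hQ : Q ≠ 0) (hdeg : Q.degree ≤ P.degree) (a : F[X]) :
    {d : F[X] // d.degree < P.degree ∧ Q ∣ d + a} ≃ F[X]_(P.natDegree - Q.natDegree) := by
  have hP : P ≠ 0 := by
    rintro rfl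
    simp_all
  have hQP : Q.natDegree ≤ P.natDegree := natDegree_le_natDegree hdeg
  have hr : (-a % Q).degree < P.degree := (degree_mod_lt _ hQ).trans_le hdeg
  have hra : Q ∣ -a % Q + a :=
    ⟨-(-a / Q), by linear_combination EuclideanDomain.mod_add_div (-a) Q⟩
  refine (Equiv.ofBijective (fun t => ⟨Q * t + -a % Q, ?deg, ?dvd⟩) ⟨?inj, ?surj⟩).symm
  case deg =>
    refine (degree_add_le _ _).trans_lt (max_lt ?_ hr)
    rw [degree_eq_natDegree hP]
    exact (degree_mul_lt_iff hQ hQP).mpr (mem_degreeLT.mp t.2)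
  case dvd => simpa [add_assoc] using dvd_add (dvd_mul_right Q t) hra
  case inj =>
    intro t t' h
    exact Subtype.ext (mul_left_cancel₀ hQ (add_right_cancel (congrArg Subtype.val h)))
  case surj =>
    rintro ⟨d, hd, hda⟩
    obtain ⟨c, hc⟩ : Q ∣ d - -a % Q := by simpa using dvd_sub hda hra
    refine ⟨⟨c, mem_degreeLT.mpr ((degree_mul_lt_iff hQ hQP).mp ?_)⟩, Subtype.ext ?_⟩
    · rw [← hc, ← degree_eq_natDegree hP]
      exact (degree_sub_le _ _).trans_lt (max_lt hd hr)
    · simp [← hc]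

theorem card_degreeLT [Fintype F] (n : ℕ) : Nat.card F[X]_n = Fintype.card F ^ n := by
  simp [Nat.card_congr (degreeLTEquiv F n).toEquiv]

theorem card_continuation [Fintype F] (hQ : Q ≠ 0) (hcop : IsCoprime P Q)
    (hdeg : Q.degree ≤ P.degree) (w : F[X]) (k : ℕ) :
    Nat.card (Continuation (RatFunc F) {d | d.degree < P.degree} P Q w k) =
      Fintype.card F ^ (k * (P.natDegree - Q.natDegree)) := by
  induction k with
  | zero => simp [Continuation.card_zero]
  | succ k ih =>
    let D : Set F[X] := {d | d.degree < P.degree}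
    have e : Continuation (RatFunc F) D P Q w (k + 1) ≃
        Continuation (RatFunc F) D P Q w k × F[X]_(P.natDegree - Q.natDegree) :=
      (Continuation.consEquiv hQ hcop).trans
        ((Equiv.sigmaCongrRight fun t : Continuation (RatFunc F) D P Q w k =>
          residueClassEquiv hQ hdeg (P * t.endpoint)).trans
          (Equiv.sigmaEquivProd _ _))
    rw [Nat.card_congr e, Nat.card_prod, ih, card_degreeLT, ← pow_add, Nat.succ_mul]

theorem nonempty_continuation [Fintype F] (hQ : Q ≠ 0) (hcop : IsCoprime P Q)
    (hdeg : Q.degree ≤ P.degree) (w : F[X]) (k : ℕ) :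
    Nonempty (Continuation (RatFunc F) {d | d.degree < P.degree} P Q w k) := by
  refine (Nat.card_pos_iff.mp ?_).1
  rw [card_continuation hQ hcop hdeg]
  exact pow_pos Fintype.card_pos _

end FiniteField

end PQExpansion

theorem pq_continuation_count (Fq : Type*) [Field Fq] [Fintype Fq]
    (P Q : Polynomial Fq) (hQ : Q ≠ 0) (hcop : IsCoprime P Q)
    (hdeg : Q.degree < P.degree)
    (w : Polynomial Fq) (k : ℕ) :
    Nonempty {s : Fin k → Polynomial Fq //
        (∀ i, (s i).degree < P.degree) ∧
        ∃ u : Polynomial Fq, algebraMap (Polynomial Fq) (RatFunc Fq) u =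
          ((algebraMap (Polynomial Fq) (RatFunc Fq) P) /
            (algebraMap (Polynomial Fq) (RatFunc Fq) Q)) ^ k *
              algebraMap (Polynomial Fq) (RatFunc Fq) w +
            ∑ i : Fin k,
              (algebraMap (Polynomial Fq) (RatFunc Fq) (s i) /
                algebraMap (Polynomial Fq) (RatFunc Fq) Q) *
              ((algebraMap (Polynomial Fq) (RatFunc Fq) P) /
                (algebraMap (Polynomial Fq) (RatFunc Fq) Q)) ^ (i : ℕ)} ∧
    Nat.card {s : Fin k → Polynomial Fq //
        (∀ i, (s i).degree < P.degree) ∧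
        ∃ u : Polynomial Fq, algebraMap (Polynomial Fq) (RatFunc Fq) u =
          ((algebraMap (Polynomial Fq) (RatFunc Fq) P) /
            (algebraMap (Polynomial Fq) (RatFunc Fq) Q)) ^ k *
              algebraMap (Polynomial Fq) (RatFunc Fq) w +
            ∑ i : Fin k,
              (algebraMap (Polynomial Fq) (RatFunc Fq) (s i) /
                algebraMap (Polynomial Fq) (RatFunc Fq) Q) *
              ((algebraMap (Polynomial Fq) (RatFunc Fq) P) /
                (algebraMap (Polynomial Fq) (RatFunc Fq) Q)) ^ (i : ℕ)} =
      (Fintype.card Fq) ^ (k * (P.natDegree - Q.natDegree)) := by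
  exact ⟨PQExpansion.nonempty_continuation hQ hcop hdeg.le w k,
    PQExpansion.card_continuation hQ hcop hdeg.le w k⟩
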